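/- Assume s ≥ 1. Let α β : ℂ and let ψ := (α/√2) • (|0^r, 0^s⟩ + |1^r, 1^s⟩) + (β/√2) • (|2^r, 2^s⟩ + |3^r, 3^s⟩) be the GHZ-like encoding of the qubit state α|0⟩ + β|1⟩ on all r + s qudits. Then for every complex matrix X indexed by (Fin r → Fin 4): trace((X ⊗ 1) * |ψ⟩⟨ψ|) = trace(X * ρ), where ρ := ((‖α‖² : ℂ)/2) • (|0^r⟩⟨0^r| + |1^r⟩⟨1^r|) + ((‖β‖² : ℂ)/2) • (|2^r⟩⟨2^r| + |3^r⟩⟨3^r|). (The reduced state of a larger GHZ-like encoding on a proper sub-block of its qudits is the mixed state ρ.) -/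

import Mathlib

/-!
Write `ψ = ∑ᵢ aᵢ ⊗ bᵢ` with `aᵢ = cᵢ |i^r⟩` and `bᵢ = |i^s⟩`. Since `s ≥ 1`, the constant
functions `fun _ => i` on `Fin s` are pairwise distinct, so the `bᵢ` are orthonormal. Tracing
out the second block therefore kills every cross term:
`trace ((X ⊗ 1) |ψ⟩⟨ψ|) = ∑ᵢ trace (X |aᵢ⟩⟨aᵢ|)`, and `|cᵢ|² = ‖α‖²/2` or `‖β‖²/2`.
-/

open Matrix Kronecker

/-- Standard basis vector of a single block of `q` qudits, supported at the
constant function `fun _ => u`. -/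
def basisVec (q : ℕ) (u : Fin 4) : (Fin q → Fin 4) → ℂ :=
  fun x => if x = (fun _ => u) then 1 else 0

/-- Standard basis vector `|u^r, v^s⟩` of the two-block system, supported at
the pair of constant functions. -/
def basisVec2 (r s : ℕ) (u v : Fin 4) : ((Fin r → Fin 4) × (Fin s → Fin 4)) → ℂ :=
  fun x => if x = ((fun _ => u), (fun _ => v)) then 1 else 0

/-- The GHZ-like encoding of `α|0⟩ + β|1⟩` on all `r + s` qudits. -/
noncomputable def ghzEnc (r s : ℕ) (α β : ℂ) : ((Fin r → Fin 4) × (Fin s → Fin 4)) → ℂ :=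
  (α / ((Real.sqrt 2 : ℝ) : ℂ)) • (basisVec2 r s 0 0 + basisVec2 r s 1 1)
    + (β / ((Real.sqrt 2 : ℝ) : ℂ)) • (basisVec2 r s 2 2 + basisVec2 r s 3 3)

section TensorVec

variable {m n ι R : Type*} [CommSemiring R]

def tensorVec (a : m → R) (b : n → R) : m × n → R := fun p => a p.1 * b p.2

@[simp]
lemma tensorVec_apply (a : m → R) (b : n → R) (p : m × n) : tensorVec a b p = a p.1 * b p.2 :=
  rfl

lemma smul_tensorVec (c : R) (a : m → R) (b : n → R) :
    tensorVec (c • a) b = c • tensorVec a b := by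
  ext p; simp [mul_assoc]

lemma star_tensorVec [StarRing R] (a : m → R) (b : n → R) :
    star (tensorVec a b) = tensorVec (star a) (star b) := by
  ext p; simp

variable [Fintype m] [Fintype n]

lemma kronecker_mulVec_tensorVec {m' n' : Type*} (A : Matrix m' m R) (B : Matrix n' n R)
    (a : m → R) (b : n → R) :
    (A ⊗ₖ B) *ᵥ tensorVec a b = tensorVec (A *ᵥ a) (B *ᵥ b) := by
  ext ⟨i, j⟩
  simp only [mulVec, dotProduct, tensorVec_apply, kroneckerMap_apply, Fintype.sum_prod_type,
    Finset.sum_mul_sum]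
  exact Finset.sum_congr rfl fun _ _ => Finset.sum_congr rfl fun _ _ => by ring

lemma tensorVec_dotProduct_tensorVec (a c : m → R) (b d : n → R) :
    tensorVec a b ⬝ᵥ tensorVec c d = (a ⬝ᵥ c) * (b ⬝ᵥ d) := by
  simp only [dotProduct, tensorVec_apply, Fintype.sum_prod_type, Finset.sum_mul_sum]
  exact Finset.sum_congr rfl fun _ _ => Finset.sum_congr rfl fun _ _ => by ring

variable [StarRing R] [DecidableEq n]

lemma kronecker_one_mulVec_tensorVec_dotProduct_star (X : Matrix m m R)
    (a a' : m → R) (b b' : n → R) :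
    ((X ⊗ₖ (1 : Matrix n n R)) *ᵥ tensorVec a b) ⬝ᵥ star (tensorVec a' b')
      = (b ⬝ᵥ star b') * ((X *ᵥ a) ⬝ᵥ star a') := by
  rw [kronecker_mulVec_tensorVec, one_mulVec, star_tensorVec, tensorVec_dotProduct_tensorVec,
    mul_comm]

theorem trace_kronecker_one_mul_vecMulVec_sum_tensorVec [Fintype ι] [DecidableEq ι]
    (X : Matrix m m R) (a : ι → m → R) (b : ι → n → R)
    (hb : ∀ i j, b i ⬝ᵥ star (b j) = if i = j then 1 else 0) :
    ((X ⊗ₖ (1 : Matrix n n R)) *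
        vecMulVec (∑ i, tensorVec (a i) (b i)) (star (∑ i, tensorVec (a i) (b i)))).trace
      = (X * ∑ i, vecMulVec (a i) (star (a i))).trace := by
  simp only [mul_vecMulVec, trace_vecMulVec, Matrix.mul_sum, trace_sum, mulVec_sum, star_sum,
    sum_dotProduct, dotProduct_sum, kronecker_one_mulVec_tensorVec_dotProduct_star, hb, ite_mul,
    one_mul, zero_mul, Finset.sum_ite_eq', Finset.mem_univ, if_true]

end TensorVec

lemma basisVec_eq_single (q : ℕ) (u : Fin 4) : basisVec q u = Pi.single (fun _ => u) 1 := by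
  ext x; simp [basisVec, Pi.single_apply]

lemma basisVec2_eq_tensorVec (r s : ℕ) (u v : Fin 4) :
    basisVec2 r s u v = tensorVec (basisVec r u) (basisVec s v) := by
  ext ⟨x, y⟩
  simp only [basisVec2, basisVec, tensorVec_apply, ite_zero_mul_ite_zero, mul_one, Prod.mk.injEq]

lemma basisVec_dotProduct_star_basisVec {s : ℕ} (hs : 0 < s) (u v : Fin 4) :
    basisVec s u ⬝ᵥ star (basisVec s v) = if u = v then 1 else 0 := by
  have : Nonempty (Fin s) := ⟨⟨0, hs⟩⟩
  simp [basisVec_eq_single, Pi.star_single, Pi.single_apply, funext_iff, eq_comm]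

lemma ghzEnc_eq_sum_tensorVec (r s : ℕ) (α β : ℂ) :
    ghzEnc r s α β = ∑ i, tensorVec ((![α, α, β, β] i / ((Real.sqrt 2 : ℝ) : ℂ)) • basisVec r i)
      (basisVec s i) := by
  simp [ghzEnc, Fin.sum_univ_four, basisVec2_eq_tensorVec, smul_tensorVec, smul_add, add_assoc]

lemma star_mul_self_div_sqrt_two (z : ℂ) :
    star (z / ((Real.sqrt 2 : ℝ) : ℂ)) * (z / ((Real.sqrt 2 : ℝ) : ℂ))
      = ((‖z‖ ^ 2 : ℝ) : ℂ) / 2 := by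
  rw [Complex.star_def, Complex.conj_mul', ← Complex.ofReal_pow, norm_div, Complex.norm_real,
    Real.norm_of_nonneg (Real.sqrt_nonneg 2), div_pow, Real.sq_sqrt zero_le_two]
  norm_cast

theorem reduced_state_of_ghz (r s : ℕ) (hs : 1 ≤ s) (α β : ℂ)
    (X : Matrix (Fin r → Fin 4) (Fin r → Fin 4) ℂ) :
    ((X ⊗ₖ (1 : Matrix (Fin s → Fin 4) (Fin s → Fin 4) ℂ)) *
        vecMulVec (ghzEnc r s α β) (star (ghzEnc r s α β))).trace
    = (X *
        ((((‖α‖^2 : ℝ) : ℂ)/2) • (vecMulVec (basisVec r 0) (star (basisVec r 0))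
            + vecMulVec (basisVec r 1) (star (basisVec r 1)))
          + (((‖β‖^2 : ℝ) : ℂ)/2) • (vecMulVec (basisVec r 2) (star (basisVec r 2))
            + vecMulVec (basisVec r 3) (star (basisVec r 3))))).trace := by
  rw [ghzEnc_eq_sum_tensorVec, trace_kronecker_one_mul_vecMulVec_sum_tensorVec _ _ _
    (basisVec_dotProduct_star_basisVec hs)]
  simp only [Fin.sum_univ_four, star_smul, smul_vecMulVec, vecMulVec_smul, smul_smul,
    star_mul_self_div_sqrt_two, smul_add, add_assoc, Matrix.cons_val]
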